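/- Consider unconstrained online gradient descent x_{t+1} = x_t - (1/L)∇f_t(x_t) where each f_t is m-strongly convex and L-smooth with unconstrained minimizer x*_t. Then the dynamic regret satisfies ∑_{t=1}^T (f_t(x_t) - f_t(x*_t)) ≤ (L/2) ∑_{t=1}^T ‖x_t - x*_t‖², and ‖x_{t+1} - x*_{t+1}‖ ≤ (1 - m/L)‖x_t - x*_t‖ + ‖x*_t - x*_{t+1}‖, hence ∑_{t=1}^T ‖x_t - x*_t‖ ≤ (L/m)(‖x_1 - x*_1‖ + ∑_{t=1}^T ‖x*_t - x*_{t+1}‖). -/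

import Mathlib

/-!
At a minimiser `x*` the gradient vanishes, so the quadratic upper bound given by `L`-smoothness
reads `f x - f x* ≤ L/2 ‖x - x*‖²`; summing gives the regret bound.

For the contraction, write `f = h + m/2 ‖·‖²`. Then `h` is convex and satisfies the quadratic
upper bound with constant `L - m`, hence `∇h` is co-coercive:
`‖∇h u - ∇h v‖² ≤ (L - m) ⟪∇h u - ∇h v, u - v⟫`.
Since `u - ∇f u / L = ((L - m) u - ∇h u) / L`, co-coercivity makes the gradient step a
`(1 - m/L)`-Lipschitz map, and it fixes `x*_t`. The triangle inequality through `x*_t` gives the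
tracking recursion, and summing `e_{t+1} ≤ (1 - m/L) e_t + ‖x*_t - x*_{t+1}‖` telescopes to the
last bound.
-/

open RealInnerProductSpace Set

section

variable {F : Type*} [NormedAddCommGroup F] [InnerProductSpace ℝ F]

def HasQuadraticUpperBound (φ : F → ℝ) (g : F → F) (β : ℝ) : Prop :=
  ∀ a b, φ b ≤ φ a + ⟪g a, b - a⟫ + β / 2 * ‖b - a‖ ^ 2

theorem HasQuadraticUpperBound.sub_half_mul_norm_sq {φ : F → ℝ} {g : F → F} {β : ℝ}
    (h : HasQuadraticUpperBound φ g β) (m : ℝ) :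
    HasQuadraticUpperBound (fun y => φ y - m / 2 * ‖y‖ ^ 2) (fun y => g y - m • y) (β - m) := by
  intro a b
  have hsq : ‖b‖ ^ 2 = ‖a‖ ^ 2 + 2 * ⟪a, b - a⟫ + ‖b - a‖ ^ 2 := by
    rw [← norm_add_sq_real, add_sub_cancel]
  simp only [inner_sub_left, real_inner_smul_left]
  linear_combination h a b - m / 2 * hsq

theorem norm_smul_sub_le_of_sq_le_mul_inner {δ Δ : F} {c : ℝ} (hc : 0 ≤ c)
    (hΔ : ‖Δ‖ ^ 2 ≤ c * ⟪Δ, δ⟫) : ‖c • δ - Δ‖ ≤ c * ‖δ‖ := by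
  have hinner : 0 ≤ c * ⟪Δ, δ⟫ := (sq_nonneg _).trans hΔ
  refine le_of_pow_le_pow_left₀ two_ne_zero (by positivity) ?_
  rw [norm_sub_sq_real, norm_smul, real_inner_smul_left, real_inner_comm, Real.norm_of_nonneg hc]
  linarith

variable [CompleteSpace F]

theorem IsLocalMin.hasGradientAt_eq_zero {φ : F → ℝ} {g a : F} (h : IsLocalMin φ a)
    (hg : HasGradientAt φ g a) : g = 0 :=
  (InnerProductSpace.toDual ℝ F).map_eq_zero_iff.1 (h.hasFDerivAt_eq_zero hg.hasFDerivAt)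

theorem HasGradientAt.hasDerivAt_add_smul {φ : F → ℝ} {g u v : F} {s : ℝ}
    (h : HasGradientAt φ g (u + s • v)) :
    HasDerivAt (fun r : ℝ => φ (u + r • v)) ⟪g, v⟫ s := by
  have hline : HasDerivAt (fun r : ℝ => u + r • v) v s := by
    simpa using ((hasDerivAt_id s).smul_const v).const_add u
  have := h.hasFDerivAt.comp_hasDerivAt s hline
  simp only [InnerProductSpace.toDual_apply_apply] at this
  exact this

theorem HasGradientAt.sub_half_mul_norm_sq {φ : F → ℝ} {g z : F} (hg : HasGradientAt φ g z)
    (m : ℝ) : HasGradientAt (fun y => φ y - m / 2 * ‖y‖ ^ 2) (g - m • z) z := by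
  rw [hasGradientAt_iff_hasFDerivAt]
  refine (hg.hasFDerivAt.sub
    ((hasStrictFDerivAt_norm_sq z).hasFDerivAt.const_mul (m / 2))).congr_fderiv ?_
  ext w
  simp only [sub_apply, smul_apply, InnerProductSpace.toDual_apply_apply, coe_innerSL_apply,
    map_sub, map_smul, smul_eq_mul, nsmul_eq_mul, Nat.cast_ofNat]
  ring

theorem ConvexOn.add_inner_sub_le_of_hasGradientAt {φ : F → ℝ} {g u : F}
    (hconv : ConvexOn ℝ univ φ) (hg : HasGradientAt φ g u) (v : F) :
    φ u + ⟪g, v - u⟫ ≤ φ v := by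
  have hline : ConvexOn ℝ univ (fun r : ℝ => φ (u + r • (v - u))) := by
    have := hconv.comp_affineMap (AffineMap.lineMap u v : ℝ →ᵃ[ℝ] F)
    simpa [Function.comp_def, AffineMap.lineMap_apply, add_comm] using this
  have hderiv : HasDerivAt (fun r : ℝ => φ (u + r • (v - u))) ⟪g, v - u⟫ 0 :=
    HasGradientAt.hasDerivAt_add_smul (by simpa using hg)
  have := hline.le_slope_of_hasDerivAt (mem_univ 0) (mem_univ 1) one_pos hderiv
  simp only [slope_def_field, one_smul, add_sub_cancel, zero_smul, add_zero, sub_zero,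
    div_one] at this
  linarith

theorem hasQuadraticUpperBound_of_lipschitz_gradient {φ : F → ℝ} {g : F → F} {L : ℝ}
    (hg : ∀ z, HasGradientAt φ (g z) z) (hlip : ∀ a b, ‖g a - g b‖ ≤ L * ‖a - b‖) :
    HasQuadraticUpperBound φ g L := by
  intro u v
  set w := v - u
  have hderiv (r : ℝ) : HasDerivAt (fun r : ℝ => φ (u + r • w)) ⟪g (u + r • w), w⟫ r :=
    (hg _).hasDerivAt_add_smul
  have hquad (r : ℝ) : HasDerivAt (fun r : ℝ => φ u + r * ⟪g u, w⟫ + L / 2 * ‖w‖ ^ 2 * r ^ 2)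
      (⟪g u, w⟫ + L * ‖w‖ ^ 2 * r) r := by
    refine ((((hasDerivAt_id r).mul_const ⟪g u, w⟫).const_add (φ u)).add
      ((hasDerivAt_pow 2 r).const_mul (L / 2 * ‖w‖ ^ 2))).congr_deriv ?_
    simp only [one_mul, Nat.cast_ofNat, Nat.add_one_sub_one, pow_one]
    ring
  have hslope (r : ℝ) (hr : r ∈ Ico (0 : ℝ) 1) :
      ⟪g (u + r • w), w⟫ ≤ ⟪g u, w⟫ + L * ‖w‖ ^ 2 * r := by
    have : ⟪g (u + r • w) - g u, w⟫ ≤ L * ‖w‖ ^ 2 * r :=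
      calc ⟪g (u + r • w) - g u, w⟫ ≤ ‖g (u + r • w) - g u‖ * ‖w‖ := real_inner_le_norm _ _
        _ ≤ L * ‖(u + r • w) - u‖ * ‖w‖ := by gcongr; exact hlip _ _
        _ = L * ‖w‖ ^ 2 * r := by
          rw [add_sub_cancel_left, norm_smul, Real.norm_of_nonneg hr.1]; ring
    rw [inner_sub_left] at this
    linarith
  have := image_le_of_deriv_right_le_deriv_boundary
    (fun r _ => (hderiv r).continuousAt.continuousWithinAt) (fun r _ => (hderiv r).hasDerivWithinAt)
    (by simp) (fun r _ => (hquad r).continuousAt.continuousWithinAt)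
    (fun r _ => (hquad r).hasDerivWithinAt) hslope (right_mem_Icc.2 zero_le_one)
  simpa [w] using this

theorem ConvexOn.add_inner_sub_add_le_of_hasQuadraticUpperBound {φ : F → ℝ} {g : F → F} {β : ℝ}
    (hconv : ConvexOn ℝ univ φ) (hg : ∀ z, HasGradientAt φ (g z) z)
    (hq : HasQuadraticUpperBound φ g β) (a b : F) (s : ℝ) :
    φ a + ⟪g a, b - a⟫ + (s - β * s ^ 2 / 2) * ‖g b - g a‖ ^ 2 ≤ φ b := by
  set Δ := g b - g a
  have hlow := hconv.add_inner_sub_le_of_hasGradientAt (hg a) (b - s • Δ)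
  have hup := hq b (b - s • Δ)
  have hΔ : ⟪g b, Δ⟫ - ⟪g a, Δ⟫ = ‖Δ‖ ^ 2 := by
    rw [← inner_sub_left, real_inner_self_eq_norm_sq]
  rw [sub_sub_cancel_left, norm_neg, norm_smul, Real.norm_eq_abs, mul_pow, sq_abs,
    inner_neg_right, real_inner_smul_right] at hup
  rw [sub_right_comm, inner_sub_right, real_inner_smul_right] at hlow
  linear_combination hlow + hup - s * hΔ

theorem ConvexOn.norm_sub_sq_le_mul_inner {φ : F → ℝ} {g : F → F} {β : ℝ}
    (hconv : ConvexOn ℝ univ φ) (hg : ∀ z, HasGradientAt φ (g z) z)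
    (hq : HasQuadraticUpperBound φ g β) (hβ : 0 ≤ β) (u v : F) :
    ‖g u - g v‖ ^ 2 ≤ β * ⟪g u - g v, u - v⟫ := by
  have hsum (s : ℝ) : (2 * s - β * s ^ 2) * ‖g u - g v‖ ^ 2 ≤ ⟪g u - g v, u - v⟫ := by
    have h₁ := hconv.add_inner_sub_add_le_of_hasQuadraticUpperBound hg hq u v s
    have h₂ := hconv.add_inner_sub_add_le_of_hasQuadraticUpperBound hg hq v u s
    rw [norm_sub_rev] at h₁
    have : ⟪g u - g v, u - v⟫ = -⟪g u, v - u⟫ - ⟪g v, u - v⟫ := by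
      simp only [inner_sub_left, inner_sub_right]; ring
    linarith
  rcases hβ.eq_or_lt with rfl | hβ
  · rw [zero_mul]
    -- `2 s ‖Δ‖² ≤ ⟪Δ, u - v⟫` for every `s` forces `Δ = 0`.
    by_contra! hpos
    set N := ‖g u - g v‖ ^ 2
    set c := ⟪g u - g v, u - v⟫
    have hs : 2 * ((c + 1) / (2 * N)) * N = c + 1 := by field_simp
    have := hsum ((c + 1) / (2 * N))
    rw [zero_mul, sub_zero, hs] at this
    linarith
  · have := hsum β⁻¹
    rw [show 2 * β⁻¹ - β * β⁻¹ ^ 2 = β⁻¹ by field_simp; ring, inv_mul_le_iff₀ hβ] at this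
    exact this

theorem norm_sub_inv_smul_gradient_sub_le {f : F → ℝ} {f' : F → F} {m L : ℝ} (hL : 0 < L)
    (hmL : m ≤ L) (hgrad : ∀ y, HasGradientAt f (f' y) y)
    (hsc : ConvexOn ℝ univ (fun y => f y - m / 2 * ‖y‖ ^ 2))
    (hsmooth : ∀ x y, ‖f' x - f' y‖ ≤ L * ‖x - y‖) (u v : F) :
    ‖(u - (1 / L) • f' u) - (v - (1 / L) • f' v)‖ ≤ (1 - m / L) * ‖u - v‖ := by
  have hcoco := hsc.norm_sub_sq_le_mul_inner (fun z => (hgrad z).sub_half_mul_norm_sq m)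
    ((hasQuadraticUpperBound_of_lipschitz_gradient hgrad hsmooth).sub_half_mul_norm_sq m)
    (sub_nonneg.2 hmL) u v
  have hstep : (u - (1 / L) • f' u) - (v - (1 / L) • f' v)
      = (1 / L) • ((L - m) • (u - v) - ((f' u - m • u) - (f' v - m • v))) := by
    match_scalars <;> field_simp <;> ring
  rw [hstep, norm_smul, Real.norm_of_nonneg (by positivity)]
  calc 1 / L * ‖(L - m) • (u - v) - ((f' u - m • u) - (f' v - m • v))‖
      ≤ 1 / L * ((L - m) * ‖u - v‖) := by
        gcongr
        exact norm_smul_sub_le_of_sq_le_mul_inner (sub_nonneg.2 hmL) hcoco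
    _ = (1 - m / L) * ‖u - v‖ := by field_simp

end

theorem sum_Icc_le_inv_mul_of_le_one_sub_mul_add {a b : ℕ → ℝ} {c : ℝ} (hc : 0 < c)
    (ha : ∀ t, 0 ≤ a t) (hrec : ∀ t, a (t + 1) ≤ (1 - c) * a t + b t) (T : ℕ) :
    ∑ t ∈ Finset.Icc 1 T, a t ≤ c⁻¹ * (a 1 + ∑ t ∈ Finset.Icc 1 T, b t) := by
  have key (N : ℕ) :
      c * ∑ t ∈ Finset.Icc 1 N, a t + a (N + 1) ≤ a 1 + ∑ t ∈ Finset.Icc 1 N, b t := by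
    induction N with
    | zero => simp
    | succ n ih =>
      rw [Finset.sum_Icc_succ_top (Nat.le_add_left 1 n),
        Finset.sum_Icc_succ_top (Nat.le_add_left 1 n)]
      linarith [hrec (n + 1)]
  rw [le_inv_mul_iff₀ hc]
  linarith [key T, ha (T + 1)]

/-- Unconstrained online gradient descent with stepsize `1/L`:
regret bounded by `(L/2)∑‖x_t - x*_t‖²`, per-step contraction
`‖x_{t+1} - x*_{t+1}‖ ≤ (1 - m/L)‖x_t - x*_t‖ + ‖x*_t - x*_{t+1}‖`, and the
cumulative tracking bound `∑‖x_t - x*_t‖ ≤ (L/m)(‖x_1 - x*_1‖ + ∑‖x*_t - x*_{t+1}‖)`. -/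
theorem stmt_14 {d : ℕ} (f : ℕ → EuclideanSpace ℝ (Fin d) → ℝ)
    (f' : ℕ → EuclideanSpace ℝ (Fin d) → EuclideanSpace ℝ (Fin d))
    (m L : ℝ) (hm : 0 < m) (hmL : m ≤ L)
    (hgrad : ∀ t y, HasGradientAt (f t) (f' t y) y)
    (hsc : ∀ t, ConvexOn ℝ Set.univ (fun y => f t y - m / 2 * ‖y‖ ^ 2))
    (hsmooth : ∀ t x y, ‖f' t x - f' t y‖ ≤ L * ‖x - y‖)
    (x xs : ℕ → EuclideanSpace ℝ (Fin d))
    (hxs_min : ∀ t y, f t (xs t) ≤ f t y)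
    (hstep : ∀ t, x (t + 1) = x t - (1 / L) • f' t (x t)) (T : ℕ) :
    (∑ t ∈ Finset.Icc 1 T, (f t (x t) - f t (xs t))
        ≤ L / 2 * ∑ t ∈ Finset.Icc 1 T, ‖x t - xs t‖ ^ 2) ∧
    (∀ t, ‖x (t + 1) - xs (t + 1)‖
        ≤ (1 - m / L) * ‖x t - xs t‖ + ‖xs t - xs (t + 1)‖) ∧
    (∑ t ∈ Finset.Icc 1 T, ‖x t - xs t‖
        ≤ L / m * (‖x 1 - xs 1‖ + ∑ t ∈ Finset.Icc 1 T, ‖xs t - xs (t + 1)‖)) := by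
  have hL : 0 < L := hm.trans_le hmL
  have hcrit (t : ℕ) : f' t (xs t) = 0 :=
    IsLocalMin.hasGradientAt_eq_zero (Filter.Eventually.of_forall (hxs_min t)) (hgrad t _)
  have hcontract (t : ℕ) : ‖x (t + 1) - xs t‖ ≤ (1 - m / L) * ‖x t - xs t‖ := by
    simpa [hstep, hcrit] using
      norm_sub_inv_smul_gradient_sub_le hL hmL (hgrad t) (hsc t) (hsmooth t) (x t) (xs t)
  have htrack (t : ℕ) :
      ‖x (t + 1) - xs (t + 1)‖ ≤ (1 - m / L) * ‖x t - xs t‖ + ‖xs t - xs (t + 1)‖ :=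
    (norm_sub_le_norm_sub_add_norm_sub _ (xs t) _).trans (by gcongr; exact hcontract t)
  refine ⟨?_, htrack, ?_⟩
  · rw [Finset.mul_sum]
    gcongr with t
    have := hasQuadraticUpperBound_of_lipschitz_gradient (hgrad t) (hsmooth t) (xs t) (x t)
    rw [hcrit, inner_zero_left, add_zero] at this
    linarith
  · simpa [inv_div] using sum_Icc_le_inv_mul_of_le_one_sub_mul_add (div_pos hm hL)
      (fun t => norm_nonneg (x t - xs t)) htrack T
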